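/- (Schedulability of the reduction within makespan 3.) Let l be a labeling of the label cover instance and let S ⊆ E be a set of pairwise vertex-disjoint edges satisfied by l. With 2n robots (one robot r_w associated to each vertex w ∈ U ∪ V), all tasks of unit duration, and zero inter-task travel times, there exists a feasible schedule of makespan 3 in which: during the time interval [0,1] each robot r_w executes the source task w; during [1,2] each robot r_w executes the labeled task (w, l(w)); and during [2,3], for each edge (u,v) ∈ S, the two robots r_u and r_v jointly execute the edge task ((u,v),(l(u),l(v))). In this schedule every task is executed after all tasks it depends on have finished, each robot executes at most one task at a time, source and labeled tasks receive coalitions of size exactly 1, and the scheduled edge tasks receive coalitions of size exactly 2; the resulting total reward is 4εn + |S|. -/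

import Mathlib

namespace MRTA

/-- Tasks of the reduced MRTA instance: a source task per vertex `w : U ⊕ V`,
a labeled task per vertex-label pair, and an edge task per edge and label pair. -/
inductive Task (U V Λ : Type) where
  | src : U ⊕ V → Task U V Λ
  | lab : U ⊕ V → Λ → Task U V Λ
  | edg : U → V → Λ → Λ → Task U V Λ
  deriving DecidableEq

variable {U V Λ : Type} [Fintype U] [Fintype V] [Fintype Λ]
  [DecidableEq U] [DecidableEq V] [DecidableEq Λ]

/-- Reward of a source task `w`: `ε` if exactly one robot executes it, else `0`. -/
noncomputable def srcReward (ε : ℝ) (C : Task U V Λ → ℕ) (w : U ⊕ V) : ℝ :=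
  if C (.src w) = 1 then ε else 0

/-- Reward of a labeled task `(w, l)`: `ε` if exactly one robot executes it and the
corresponding source task earned positive reward, else `0`. -/
noncomputable def labReward (ε : ℝ) (C : Task U V Λ → ℕ) (w : U ⊕ V) (l : Λ) : ℝ :=
  if C (.lab w l) = 1 ∧ 0 < srcReward ε C w then ε else 0

/-- Reward of an edge task `((u,v),(lu,lv))`: `1` if exactly two robots execute it and both
corresponding labeled tasks earned positive reward, else `0`. -/
noncomputable def edgReward (ε : ℝ) (C : Task U V Λ → ℕ) (u : U) (v : V) (lu lv : Λ) : ℝ :=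
  if C (.edg u v lu lv) = 2 ∧ 0 < labReward ε C (Sum.inl u) lu ∧
      0 < labReward ε C (Sum.inr v) lv then 1 else 0

/-- Reward of an arbitrary task. -/
noncomputable def reward (ε : ℝ) (C : Task U V Λ → ℕ) : Task U V Λ → ℝ
  | .src w => srcReward ε C w
  | .lab w l => labReward ε C w l
  | .edg u v lu lv => edgReward ε C u v lu lv

/-- The source tasks of the instance. -/
def srcTasks : Finset (Task U V Λ) := Finset.univ.image Task.src

/-- The labeled tasks of the instance: one for each vertex `w` and label `l ∈ L w`. -/
def labTasks (L : U ⊕ V → Finset Λ) : Finset (Task U V Λ) :=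
  Finset.univ.biUnion fun w => (L w).image (Task.lab w)

/-- The edge tasks of the instance: one for each edge `e ∈ E` and pair `p ∈ R e`. -/
def edgTasks (E : Finset (U × V)) (R : U × V → Finset (Λ × Λ)) : Finset (Task U V Λ) :=
  E.biUnion fun e => (R e).image fun p => Task.edg e.1 e.2 p.1 p.2

/-- All tasks of the reduced MRTA instance. -/
def allTasks (L : U ⊕ V → Finset Λ) (E : Finset (U × V)) (R : U × V → Finset (Λ × Λ)) :
    Finset (Task U V Λ) :=
  srcTasks ∪ labTasks L ∪ edgTasks E R

/-- The total reward of a coalition assignment `C`: the sum of rewards over all tasks. -/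
noncomputable def totalReward (L : U ⊕ V → Finset Λ) (E : Finset (U × V))
    (R : U × V → Finset (Λ × Λ)) (ε : ℝ) (C : Task U V Λ → ℕ) : ℝ :=
  ∑ t ∈ allTasks L E R, reward ε C t
/-- The coalition assigned to a task by a schedule `σ` (robot `r_w` for each vertex `w`,
three unit-duration time slots): the number of robots that execute the task at some slot. -/
def coalitionOf (σ : (U ⊕ V) → Fin 3 → Option (Task U V Λ)) (t : Task U V Λ) : ℕ :=
  (Finset.univ.filter fun r : U ⊕ V => ∃ s : Fin 3, σ r s = some t).card

end MRTA

/-!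
Robot `r_w` executes the source task `w`, then the labeled task `(w, ℓ w)`, then, if `w` is an
endpoint of an edge `e ∈ S`, the edge task of `e` with labels given by `ℓ`; since the edges of `S`
are vertex-disjoint that edge is unique and both its endpoints execute its task. So every source
task and every labeled task `(w, ℓ w)` has a coalition of exactly one robot, every other labeled
task none, and exactly the edge tasks of `S` have coalitions of two robots, after both of their
labeled tasks. The reward is therefore `ε` per source task, `ε` per vertex from its labeled
tasks (only `ℓ w ∈ L w` is executed), and `1` per edge of `S`: `4εn + |S|`.
-/

namespace MRTA

variable {U V Λ : Type}

def IsVertexDisjoint (S : Finset (U × V)) : Prop :=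
  ∀ e₁ ∈ S, ∀ e₂ ∈ S, e₁ ≠ e₂ → e₁.1 ≠ e₂.1 ∧ e₁.2 ≠ e₂.2

def edgeTask (ℓ : U ⊕ V → Λ) (e : U × V) : Task U V Λ :=
  .edg e.1 e.2 (ℓ (.inl e.1)) (ℓ (.inr e.2))

section Schedule

variable [DecidableEq U] [DecidableEq V] {ℓ : U ⊕ V → Λ} {S : Finset (U × V)}

def endpoints (e : U × V) : Finset (U ⊕ V) := {.inl e.1, .inr e.2}

theorem card_endpoints (e : U × V) : (endpoints e).card = 2 := by
  simp [endpoints]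

theorem IsVertexDisjoint.eq_of_mem_endpoints (hS : IsVertexDisjoint S) {e₁ e₂ : U × V}
    (he₁ : e₁ ∈ S) (he₂ : e₂ ∈ S) {r : U ⊕ V} (hr₁ : r ∈ endpoints e₁)
    (hr₂ : r ∈ endpoints e₂) : e₁ = e₂ := by
  by_contra hne
  have := hS e₁ he₁ e₂ he₂ hne
  simp only [endpoints, Finset.mem_insert, Finset.mem_singleton] at hr₁ hr₂
  rcases hr₁ with rfl | rfl <;> simp_all

variable (ℓ S) in
-- By vertex-disjointness of `S`, the edge chosen here is the only edge of `S` at `r`.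
noncomputable def edgeSlot (r : U ⊕ V) : Option (Task U V Λ) :=
  if h : ∃ e ∈ S, r ∈ endpoints e then some (edgeTask ℓ h.choose) else none

theorem edgeSlot_eq_some {r : U ⊕ V} {t : Task U V Λ} (h : edgeSlot ℓ S r = some t) :
    ∃ e ∈ S, r ∈ endpoints e ∧ t = edgeTask ℓ e := by
  unfold edgeSlot at h
  split_ifs at h with hr
  · exact ⟨hr.choose, hr.choose_spec.1, hr.choose_spec.2, (Option.some_inj.mp h).symm⟩

theorem edgeSlot_of_mem (hS : IsVertexDisjoint S) {e : U × V} (he : e ∈ S) {r : U ⊕ V}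
    (hr : r ∈ endpoints e) : edgeSlot ℓ S r = some (edgeTask ℓ e) := by
  have hex : ∃ e ∈ S, r ∈ endpoints e := ⟨e, he, hr⟩
  rw [edgeSlot, dif_pos hex,
    hS.eq_of_mem_endpoints hex.choose_spec.1 he hex.choose_spec.2 hr]

variable (ℓ S) in
noncomputable def labelingSchedule (r : U ⊕ V) : Fin 3 → Option (Task U V Λ) :=
  ![some (.src r), some (.lab r (ℓ r)), edgeSlot ℓ S r]

theorem labelingSchedule_eq_some_iff {r : U ⊕ V} {s : Fin 3} {t : Task U V Λ} :
    labelingSchedule ℓ S r s = some t ↔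
      (s = 0 ∧ t = .src r) ∨ (s = 1 ∧ t = .lab r (ℓ r)) ∨ (s = 2 ∧ edgeSlot ℓ S r = some t) := by
  fin_cases s <;> simp [labelingSchedule, eq_comm]

theorem labelingSchedule_eq_some_lab {r w : U ⊕ V} {s : Fin 3} {l : Λ}
    (h : labelingSchedule ℓ S r s = some (.lab w l)) : s = 1 ∧ w = r := by
  rcases labelingSchedule_eq_some_iff.mp h with ⟨-, h⟩ | ⟨hs, h⟩ | ⟨-, h⟩
  · cases h
  · exact ⟨hs, (Task.lab.inj h).1⟩
  · obtain ⟨e, -, -, h⟩ := edgeSlot_eq_some h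
    cases h

theorem labelingSchedule_eq_some_edg {r : U ⊕ V} {s : Fin 3} {u : U} {v : V} {lu lv : Λ}
    (h : labelingSchedule ℓ S r s = some (.edg u v lu lv)) :
    s = 2 ∧ lu = ℓ (.inl u) ∧ lv = ℓ (.inr v) := by
  rcases labelingSchedule_eq_some_iff.mp h with ⟨-, h⟩ | ⟨-, h⟩ | ⟨hs, h⟩
  · cases h
  · cases h
  · obtain ⟨e, -, -, h⟩ := edgeSlot_eq_some h
    obtain ⟨rfl, rfl, rfl, rfl⟩ := Task.edg.inj h
    exact ⟨hs, rfl, rfl⟩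

variable (ℓ S) in
def labelingCoalition [DecidableEq Λ] : Task U V Λ → Finset (U ⊕ V)
  | .src w => {w}
  | .lab w l => if l = ℓ w then {w} else ∅
  | .edg u v lu lv =>
      if (u, v) ∈ S ∧ lu = ℓ (.inl u) ∧ lv = ℓ (.inr v) then endpoints (u, v) else ∅

theorem exists_labelingSchedule_eq_some_iff [DecidableEq Λ] (hS : IsVertexDisjoint S)
    {r : U ⊕ V} {t : Task U V Λ} :
    (∃ s, labelingSchedule ℓ S r s = some t) ↔ r ∈ labelingCoalition ℓ S t := by
  simp only [labelingSchedule_eq_some_iff]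
  constructor
  · rintro ⟨s, ⟨-, rfl⟩ | ⟨-, rfl⟩ | ⟨-, h⟩⟩
    · simp [labelingCoalition]
    · simp [labelingCoalition]
    · obtain ⟨e, he, hr, rfl⟩ := edgeSlot_eq_some h
      simpa [labelingCoalition, edgeTask, he] using hr
  · intro hr
    cases t with
    | src w => exact ⟨0, .inl ⟨rfl, by rw [Finset.mem_singleton.mp hr]⟩⟩
    | lab w l =>
      simp only [labelingCoalition] at hr
      split_ifs at hr with hl
      · obtain rfl := Finset.mem_singleton.mp hr
        exact ⟨1, .inr (.inl ⟨rfl, by rw [hl]⟩)⟩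
      · simp at hr
    | edg u v lu lv =>
      simp only [labelingCoalition] at hr
      split_ifs at hr with h
      · obtain ⟨he, rfl, rfl⟩ := h
        exact ⟨2, .inr (.inr ⟨rfl, edgeSlot_of_mem hS he hr⟩)⟩
      · simp at hr

theorem coalitionOf_labelingSchedule [Fintype U] [Fintype V] [DecidableEq Λ]
    (hS : IsVertexDisjoint S) :
    coalitionOf (labelingSchedule ℓ S) = fun t => (labelingCoalition ℓ S t).card := by
  funext t
  simp [coalitionOf, exists_labelingSchedule_eq_some_iff hS]

end Schedule

section Reward

variable [DecidableEq U] [DecidableEq V] [DecidableEq Λ] {M : Type} [AddCommMonoid M]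
  (f : Task U V Λ → M)

theorem sum_edgTasks (E : Finset (U × V)) (R : U × V → Finset (Λ × Λ)) :
    ∑ t ∈ edgTasks E R, f t = ∑ e ∈ E, ∑ p ∈ R e, f (.edg e.1 e.2 p.1 p.2) := by
  rw [edgTasks, Finset.sum_biUnion]
  · refine Finset.sum_congr rfl fun e _ => Finset.sum_image fun p _ q _ h => ?_
    obtain ⟨-, -, h₁, h₂⟩ := Task.edg.inj h
    exact Prod.ext h₁ h₂
  · intro e _ e' _ he
    simp only [Function.onFun, Finset.disjoint_left, Finset.mem_image]
    rintro _ ⟨p, -, rfl⟩ ⟨p', -, h⟩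
    obtain ⟨h₁, h₂, -, -⟩ := Task.edg.inj h
    exact he (Prod.ext h₁.symm h₂.symm)

variable [Fintype U] [Fintype V]

theorem sum_srcTasks : ∑ t ∈ srcTasks, f t = ∑ w, f (.src w) :=
  Finset.sum_image fun _ _ _ _ h => Task.src.inj h

theorem sum_labTasks (L : U ⊕ V → Finset Λ) :
    ∑ t ∈ labTasks L, f t = ∑ w, ∑ l ∈ L w, f (.lab w l) := by
  rw [labTasks, Finset.sum_biUnion]
  · exact Finset.sum_congr rfl fun w _ =>
      Finset.sum_image fun _ _ _ _ h => (Task.lab.inj h).2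
  · intro w _ w' _ hw
    simp only [Function.onFun, Finset.disjoint_left, Finset.mem_image]
    rintro _ ⟨l, -, rfl⟩ ⟨l', -, h⟩
    exact hw (Task.lab.inj h).1.symm

theorem sum_allTasks (L : U ⊕ V → Finset Λ) (E : Finset (U × V))
    (R : U × V → Finset (Λ × Λ)) :
    ∑ t ∈ allTasks L E R, f t = ∑ w, f (.src w) + ∑ w, ∑ l ∈ L w, f (.lab w l) +
      ∑ e ∈ E, ∑ p ∈ R e, f (.edg e.1 e.2 p.1 p.2) := by
  have h₁ : Disjoint (srcTasks : Finset (Task U V Λ)) (labTasks L) := by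
    rw [Finset.disjoint_right]
    intro t ht
    simp only [labTasks, Finset.mem_biUnion, Finset.mem_image] at ht
    obtain ⟨w, -, l, -, rfl⟩ := ht
    simp [srcTasks]
  have h₂ : Disjoint (srcTasks ∪ labTasks L) (edgTasks E R) := by
    rw [Finset.disjoint_right]
    intro t ht
    simp only [edgTasks, Finset.mem_biUnion, Finset.mem_image] at ht
    obtain ⟨e, -, p, -, rfl⟩ := ht
    simp [srcTasks, labTasks]
  rw [allTasks, Finset.sum_union h₂, Finset.sum_union h₁, sum_srcTasks, sum_labTasks,
    sum_edgTasks]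

end Reward

section LabelingReward

variable [DecidableEq U] [DecidableEq V] [DecidableEq Λ] {ε : ℝ} {ℓ : U ⊕ V → Λ}
  {S : Finset (U × V)}

theorem srcReward_labelingCoalition (w : U ⊕ V) :
    srcReward ε (fun t => (labelingCoalition ℓ S t).card) w = ε := by
  simp [srcReward, labelingCoalition]

theorem labReward_labelingCoalition (hε : 0 < ε) (w : U ⊕ V) (l : Λ) :
    labReward ε (fun t => (labelingCoalition ℓ S t).card) w l = if l = ℓ w then ε else 0 := by
  rw [labReward, srcReward_labelingCoalition]
  by_cases hl : l = ℓ w <;> simp [labelingCoalition, hε, hl]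

theorem edgReward_labelingCoalition (hε : 0 < ε) (u : U) (v : V) (lu lv : Λ) :
    edgReward ε (fun t => (labelingCoalition ℓ S t).card) u v lu lv =
      if (u, v) ∈ S ∧ lu = ℓ (.inl u) ∧ lv = ℓ (.inr v) then 1 else 0 := by
  rw [edgReward, labReward_labelingCoalition hε, labReward_labelingCoalition hε]
  by_cases h : (u, v) ∈ S ∧ lu = ℓ (.inl u) ∧ lv = ℓ (.inr v)
  · simp [labelingCoalition, card_endpoints, hε, h]
  · simp [labelingCoalition, h]

theorem totalReward_labelingCoalition [Fintype U] [Fintype V] (hε : 0 < ε)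
    {L : U ⊕ V → Finset Λ} {E : Finset (U × V)} {R : U × V → Finset (Λ × Λ)}
    (hℓ : ∀ w, ℓ w ∈ L w) (hSE : S ⊆ E)
    (hsat : ∀ e ∈ S, (ℓ (.inl e.1), ℓ (.inr e.2)) ∈ R e) :
    totalReward L E R ε (fun t => (labelingCoalition ℓ S t).card) =
      2 * Fintype.card (U ⊕ V) * ε + S.card := by
  have hlab (w : U ⊕ V) : ∑ l ∈ L w, (if l = ℓ w then ε else 0) = ε := by
    simp [hℓ w]
  have hedg (e : U × V) : ∑ p ∈ R e,
      (if e ∈ S ∧ p.1 = ℓ (.inl e.1) ∧ p.2 = ℓ (.inr e.2) then 1 else 0 : ℝ) =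
        if e ∈ S then 1 else 0 := by
    have hpair (p : Λ × Λ) :
        (p.1 = ℓ (.inl e.1) ∧ p.2 = ℓ (.inr e.2)) ↔ p = (ℓ (.inl e.1), ℓ (.inr e.2)) :=
      (Prod.ext_iff (y := (ℓ (.inl e.1), ℓ (.inr e.2)))).symm
    by_cases he : e ∈ S
    · simp [he, hpair, hsat e he]
    · simp [he]
  simp only [totalReward, sum_allTasks, reward, srcReward_labelingCoalition,
    labReward_labelingCoalition hε, edgReward_labelingCoalition hε, hlab, hedg,
    Finset.sum_boole, Finset.filter_mem_eq_inter, Finset.inter_eq_right.mpr hSE]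
  simp only [Finset.sum_const, Finset.card_univ, nsmul_eq_mul]
  ring

end LabelingReward

end MRTA

namespace MRTA

variable {U V Λ : Type} [Fintype U] [Fintype V] [Fintype Λ]
  [DecidableEq U] [DecidableEq V] [DecidableEq Λ]

/-- **Schedulability of the reduction within makespan 3.** Given a labeling `ℓ`
and a set `S ⊆ E` of pairwise vertex-disjoint edges satisfied by `ℓ`, with `2n` robots (one
per vertex), unit task durations and zero travel times, there is a feasible schedule of
makespan `3`: in slot `0` robot `r_w` executes source task `w`, in slot `1` it executes
labeled task `(w, ℓ w)`, and in slot `2`, for each `(u,v) ∈ S`, robots `r_u, r_v` jointly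
execute the edge task `((u,v),(ℓ u, ℓ v))`; every executed task starts after all the tasks it
depends on have finished, source and labeled tasks receive coalitions of size exactly `1`,
scheduled edge tasks receive coalitions of size exactly `2`, and the resulting total reward
is `4 ε n + |S|`. -/
theorem schedulability (ε : ℝ) (hε : 0 < ε)
    (L : U ⊕ V → Finset Λ) (E : Finset (U × V)) (R : U × V → Finset (Λ × Λ))
    (n : ℕ) (hU : Fintype.card U = n) (hV : Fintype.card V = n)
    (ℓ : U ⊕ V → Λ) (hℓ : ∀ w, ℓ w ∈ L w)
    (S : Finset (U × V)) (hSE : S ⊆ E)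
    (hsat : ∀ e ∈ S, (ℓ (Sum.inl e.1), ℓ (Sum.inr e.2)) ∈ R e)
    (hdisj : ∀ e₁ ∈ S, ∀ e₂ ∈ S, e₁ ≠ e₂ → e₁.1 ≠ e₂.1 ∧ e₁.2 ≠ e₂.2) :
    ∃ σ : (U ⊕ V) → Fin 3 → Option (Task U V Λ),
      -- slot 0: each robot executes its source task
      (∀ w, σ w 0 = some (.src w)) ∧
      -- slot 1: each robot executes its labeled task
      (∀ w, σ w 1 = some (.lab w (ℓ w))) ∧
      -- slot 2: the robots of each edge of S jointly execute the corresponding edge task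
      (∀ e ∈ S,
        σ (Sum.inl e.1) 2 = some (.edg e.1 e.2 (ℓ (Sum.inl e.1)) (ℓ (Sum.inr e.2))) ∧
        σ (Sum.inr e.2) 2 = some (.edg e.1 e.2 (ℓ (Sum.inl e.1)) (ℓ (Sum.inr e.2)))) ∧
      -- every labeled task is executed after its source task has finished
      (∀ r t w l', σ r t = some (.lab w l') →
        ∃ r' t', t' < t ∧ σ r' t' = some (.src w)) ∧
      -- every edge task is executed after both of its labeled tasks have finished
      (∀ r t u v lu lv, σ r t = some (.edg u v lu lv) →
        (∃ r' t', t' < t ∧ σ r' t' = some (.lab (Sum.inl u) lu)) ∧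
        (∃ r' t', t' < t ∧ σ r' t' = some (.lab (Sum.inr v) lv))) ∧
      -- coalition sizes
      (∀ w, coalitionOf σ (.src w) = 1) ∧
      (∀ w, coalitionOf σ (.lab w (ℓ w)) = 1) ∧
      (∀ e ∈ S, coalitionOf σ (.edg e.1 e.2 (ℓ (Sum.inl e.1)) (ℓ (Sum.inr e.2))) = 2) ∧
      -- resulting total reward
      totalReward L E R ε (coalitionOf σ) = 4 * ε * (n : ℝ) + (S.card : ℝ) := by
  have hS : IsVertexDisjoint S := hdisj
  have hC := coalitionOf_labelingSchedule (ℓ := ℓ) hS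
  refine ⟨labelingSchedule ℓ S, fun w => rfl, fun w => rfl,
    fun e he => ⟨edgeSlot_of_mem hS he (by simp [endpoints]),
      edgeSlot_of_mem hS he (by simp [endpoints])⟩, ?_, ?_, ?_, ?_, ?_, ?_⟩
  · intro r s w l h
    obtain ⟨rfl, rfl⟩ := labelingSchedule_eq_some_lab h
    exact ⟨w, 0, by decide, rfl⟩
  · intro r s u v lu lv h
    obtain ⟨rfl, rfl, rfl⟩ := labelingSchedule_eq_some_edg h
    exact ⟨⟨.inl u, 1, by decide, rfl⟩, ⟨.inr v, 1, by decide, rfl⟩⟩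
  · simp [hC, labelingCoalition]
  · simp [hC, labelingCoalition]
  · intro e he
    simp [hC, labelingCoalition, he, card_endpoints]
  · rw [hC, totalReward_labelingCoalition hε hℓ hSE hsat, Fintype.card_sum, hU, hV]
    push_cast
    ring

end MRTA
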